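/- Delta of the barrier-pricing parameter ℬ: fix K > 0, B > 0, T > 0, σ > 0, r_d, r_f ∈ ℝ and φ ∈ {1, −1}. Then the function S ↦ ℬ(S) = φ(S e^{-r_f T} N(φx₂(S)) − K e^{-r_d T} N(φ(x₂(S) − σ√T))), where x₂(S) = ln(S/B)/(σ√T) + (1+α)σ√T and α = (r_d − r_f − σ²/2)/σ², is differentiable at every S > 0 with derivative ∂ℬ/∂S = φ · [ (1/2) e^{-r_f T}(erf(φ(2ln(S/B) + T(2r_d − 2r_f + σ²))/(2√2 σ√T)) + 1) − (Kφ/(√(2π) σ S √T)) exp(−(T(−2r_d + 2r_f + σ²) − 2ln(S/B))²/(8σ²T) − r_d T) + (φ/(√(2π) σ √T)) exp(−(2ln(S/B) + T(2r_d − 2r_f + σ²))²/(8σ²T) − r_f T) ]. -/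

import Mathlib

noncomputable def stdNormalCdf (z : ℝ) : ℝ :=
  ∫ x in Set.Iic z, (1 / Real.sqrt (2 * Real.pi)) * Real.exp (-x ^ 2 / 2)

/-- The error function `erf z = (2/√π) ∫_0^z e^{-t²} dt`. -/
noncomputable def erf (z : ℝ) : ℝ :=
  (2 / Real.sqrt Real.pi) * ∫ t in (0:ℝ)..z, Real.exp (-t ^ 2)

/-!
The only analytic input is the fundamental theorem of calculus, `N' = n` for the standard normal
density `n`; the rest is the chain rule and algebra. Writing `L = log (S/B)` and `v = σ√T`, the
arguments of `N` simplify to `x₂ = (2L + T(2r_d − 2r_f + σ²)) / (2v)` and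
`x₂ − v = −(T(−2r_d + 2r_f + σ²) − 2L) / (2v)`, so `n(φx₂)` and `n(φ(x₂ − v))` are the two
Gaussian exponentials of the closed form, while `N(φx₂) = (erf(φx₂/√2) + 1)/2` gives its erf term.
-/

open MeasureTheory Real

noncomputable def stdNormalPdf (x : ℝ) : ℝ :=
  1 / √(2 * π) * exp (-x ^ 2 / 2)

lemma stdNormalCdf_eq_integral (z : ℝ) : stdNormalCdf z = ∫ x in Set.Iic z, stdNormalPdf x := rfl

lemma integrable_stdNormalPdf : Integrable stdNormalPdf := by
  have := (integrable_exp_neg_mul_sq (b := 1 / 2) (by norm_num)).const_mul (1 / √(2 * π))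
  refine this.congr (.of_forall fun x => ?_)
  simp only [stdNormalPdf]
  ring_nf

lemma continuous_stdNormalPdf : Continuous stdNormalPdf := by
  unfold stdNormalPdf
  fun_prop

lemma stdNormalPdf_neg (x : ℝ) : stdNormalPdf (-x) = stdNormalPdf x := by
  simp only [stdNormalPdf, neg_sq]

lemma stdNormalCdf_zero : stdNormalCdf 0 = 1 / 2 := by
  have h_symm : ∫ x in Set.Iic (0:ℝ), stdNormalPdf x = ∫ x in Set.Ioi (0:ℝ), stdNormalPdf x := by
    rw [← neg_zero, ← integral_comp_neg_Ioi, neg_zero]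
    simp only [stdNormalPdf_neg]
  have h_half : ∫ x in Set.Ioi (0:ℝ), exp (-x ^ 2 / 2) = √(π / (1 / 2)) / 2 := by
    rw [← integral_gaussian_Ioi]
    ring_nf
  rw [stdNormalCdf_eq_integral, h_symm]
  simp only [stdNormalPdf]
  rw [integral_const_mul, h_half, show π / (1 / 2) = 2 * π by ring]
  have : √(2 * π) ≠ 0 := by positivity
  field_simp

lemma stdNormalCdf_eq_add_intervalIntegral (z : ℝ) :
    stdNormalCdf z = stdNormalCdf 0 + ∫ x in (0:ℝ)..z, stdNormalPdf x := by
  rw [stdNormalCdf_eq_integral, stdNormalCdf_eq_integral,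
    ← intervalIntegral.integral_Iic_sub_Iic integrable_stdNormalPdf.integrableOn
      integrable_stdNormalPdf.integrableOn]
  ring

lemma hasDerivAt_stdNormalCdf (z : ℝ) : HasDerivAt stdNormalCdf (stdNormalPdf z) z := by
  have hFTC := (intervalIntegral.integral_hasDerivAt_right (a := 0) (b := z)
    integrable_stdNormalPdf.intervalIntegrable
    (continuous_stdNormalPdf.stronglyMeasurableAtFilter _ _)
    continuous_stdNormalPdf.continuousAt).const_add (stdNormalCdf 0)
  exact hFTC.congr_of_eventuallyEq (.of_forall stdNormalCdf_eq_add_intervalIntegral)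

lemma stdNormalCdf_eq_erf (z : ℝ) : stdNormalCdf z = (erf (z / √2) + 1) / 2 := by
  have h2 : √2 ≠ 0 := by positivity
  have hsubst : ∫ x in (0:ℝ)..z, exp (-x ^ 2 / 2) = √2 * ∫ t in (0:ℝ)..z / √2, exp (-t ^ 2) := by
    have := intervalIntegral.integral_comp_div (a := 0) (b := z) (fun t => exp (-t ^ 2)) h2
    rw [zero_div, smul_eq_mul] at this
    rw [← this]
    congr 1 with x
    rw [div_pow, sq_sqrt zero_le_two]
    ring_nf
  rw [stdNormalCdf_eq_add_intervalIntegral, stdNormalCdf_zero, erf]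
  simp only [stdNormalPdf]
  rw [intervalIntegral.integral_const_mul, hsubst, sqrt_mul zero_le_two]
  have : √π ≠ 0 := by positivity
  field_simp
  ring

lemma hasDerivAt_log_div_div_add {B : ℝ} (v c : ℝ) {S : ℝ} (hB : B ≠ 0) (hS : S ≠ 0) :
    HasDerivAt (fun s => log (s / B) / v + c) (1 / (S * v)) S := by
  have hlog := (hasDerivAt_log (div_ne_zero hS hB)).comp S ((hasDerivAt_id S).div_const B)
  refine ((hlog.div_const v).add_const c).congr_deriv ?_
  field_simp

lemma hasDerivAt_barrierParam (A C B v c φ : ℝ) {S : ℝ} (hB : B ≠ 0) (hS : S ≠ 0) :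
    HasDerivAt (fun s => φ * (s * A * stdNormalCdf (φ * (log (s / B) / v + c)) -
        C * stdNormalCdf (φ * (log (s / B) / v + c - v))))
      (φ * (A * stdNormalCdf (φ * (log (S / B) / v + c)) +
        φ * (S * A * stdNormalPdf (φ * (log (S / B) / v + c)) -
          C * stdNormalPdf (φ * (log (S / B) / v + c - v))) / (S * v))) S := by
  have hd := hasDerivAt_log_div_div_add v c hB hS
  have hN₁ := (hasDerivAt_stdNormalCdf _).comp S (hd.const_mul φ)
  have hN₂ := (hasDerivAt_stdNormalCdf _).comp S ((hd.sub_const v).const_mul φ)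
  refine ((((hasDerivAt_id S).mul_const A).mul hN₁).sub (hN₂.const_mul C)).const_mul φ
    |>.congr_deriv ?_
  simp only [Function.comp_apply, id]
  field_simp
  ring

lemma stdNormalPdf_div_eq {φ : ℝ} (hφ : φ = 1 ∨ φ = -1) (X w : ℝ) :
    stdNormalPdf (φ * (X / w)) = 1 / √(2 * π) * exp (-X ^ 2 / (2 * w ^ 2)) := by
  have hφ_sq : φ ^ 2 = 1 := by rcases hφ with rfl | rfl <;> norm_num
  rw [stdNormalPdf, mul_pow, hφ_sq, one_mul, div_pow]
  ring_nf

theorem delta_B_general (K B T σ rd rf φ : ℝ) (hB : 0 < B) (hT : 0 < T)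
    (hσ : 0 < σ) (hφ : φ = 1 ∨ φ = -1) (S : ℝ) (hS : 0 < S) :
    HasDerivAt (fun s : ℝ =>
        φ * (s * Real.exp (-rf * T) *
            stdNormalCdf (φ * (Real.log (s / B) / (σ * Real.sqrt T) +
              (1 + (rd - rf - σ ^ 2 / 2) / σ ^ 2) * (σ * Real.sqrt T))) -
          K * Real.exp (-rd * T) *
            stdNormalCdf (φ * (Real.log (s / B) / (σ * Real.sqrt T) +
              (1 + (rd - rf - σ ^ 2 / 2) / σ ^ 2) * (σ * Real.sqrt T) - σ * Real.sqrt T))))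
      (φ * (1 / 2 * Real.exp (-rf * T) *
          (erf (φ * (2 * Real.log (S / B) + T * (2 * rd - 2 * rf + σ ^ 2)) /
              (2 * Real.sqrt 2 * σ * Real.sqrt T)) + 1) -
        K * φ / (Real.sqrt (2 * Real.pi) * σ * S * Real.sqrt T) *
          Real.exp (-(T * (-2 * rd + 2 * rf + σ ^ 2) - 2 * Real.log (S / B)) ^ 2 /
              (8 * σ ^ 2 * T) - rd * T) +
        φ / (Real.sqrt (2 * Real.pi) * σ * Real.sqrt T) *
          Real.exp (-(2 * Real.log (S / B) + T * (2 * rd - 2 * rf + σ ^ 2)) ^ 2 /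
              (8 * σ ^ 2 * T) - rf * T))) S := by
  refine (hasDerivAt_barrierParam (exp (-rf * T)) (K * exp (-rd * T)) B (σ * √T)
    ((1 + (rd - rf - σ ^ 2 / 2) / σ ^ 2) * (σ * √T)) φ hB.ne' hS.ne').congr_deriv ?_
  set q := √T
  have hq_sq : q ^ 2 = T := sq_sqrt hT.le
  set L := log (S / B)
  have hx₂ : L / (σ * q) + (1 + (rd - rf - σ ^ 2 / 2) / σ ^ 2) * (σ * q) =
      (2 * L + T * (2 * rd - 2 * rf + σ ^ 2)) / (2 * σ * q) := by
    rw [← hq_sq]; field_simp; ring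
  have hx₂_sub : L / (σ * q) + (1 + (rd - rf - σ ^ 2 / 2) / σ ^ 2) * (σ * q) - σ * q =
      -(T * (-2 * rd + 2 * rf + σ ^ 2) - 2 * L) / (2 * σ * q) := by
    rw [← hq_sq]; field_simp; ring
  have herf_arg : φ * ((2 * L + T * (2 * rd - 2 * rf + σ ^ 2)) / (2 * σ * q)) / √2 =
      φ * (2 * L + T * (2 * rd - 2 * rf + σ ^ 2)) / (2 * √2 * σ * q) := by
    field_simp
  rw [hx₂_sub, hx₂, stdNormalPdf_div_eq hφ, stdNormalPdf_div_eq hφ, stdNormalCdf_eq_erf, herf_arg,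
    sub_eq_add_neg _ (rd * T), sub_eq_add_neg _ (rf * T), exp_add, exp_add, ← neg_mul, ← neg_mul,
    mul_pow, mul_pow, hq_sq]
  field_simp
  ring_nf

/-- Delta of the barrier-pricing parameter `ℬ`. -/
theorem delta_B (K B T σ rd rf φ : ℝ) (hK : 0 < K) (hB : 0 < B) (hT : 0 < T)
    (hσ : 0 < σ) (hφ : φ = 1 ∨ φ = -1) (S : ℝ) (hS : 0 < S) :
    HasDerivAt (fun s : ℝ =>
        φ * (s * Real.exp (-rf * T) *
            stdNormalCdf (φ * (Real.log (s / B) / (σ * Real.sqrt T) +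
              (1 + (rd - rf - σ ^ 2 / 2) / σ ^ 2) * (σ * Real.sqrt T))) -
          K * Real.exp (-rd * T) *
            stdNormalCdf (φ * (Real.log (s / B) / (σ * Real.sqrt T) +
              (1 + (rd - rf - σ ^ 2 / 2) / σ ^ 2) * (σ * Real.sqrt T) - σ * Real.sqrt T))))
      (φ * (1 / 2 * Real.exp (-rf * T) *
          (erf (φ * (2 * Real.log (S / B) + T * (2 * rd - 2 * rf + σ ^ 2)) /
              (2 * Real.sqrt 2 * σ * Real.sqrt T)) + 1) -
        K * φ / (Real.sqrt (2 * Real.pi) * σ * S * Real.sqrt T) *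
          Real.exp (-(T * (-2 * rd + 2 * rf + σ ^ 2) - 2 * Real.log (S / B)) ^ 2 /
              (8 * σ ^ 2 * T) - rd * T) +
        φ / (Real.sqrt (2 * Real.pi) * σ * Real.sqrt T) *
          Real.exp (-(2 * Real.log (S / B) + T * (2 * rd - 2 * rf + σ ^ 2)) ^ 2 /
              (8 * σ ^ 2 * T) - rf * T))) S :=
  delta_B_general K B T σ rd rf φ hB hT hσ hφ S hS
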